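/- arXiv:2202.07069 — 2 statements merged into one kernel-verified Lean document; each statement's English description precedes it below -/
import Mathlib

section
/- Let V be a commutative unital quantale, F : Type u ⥤ Type u a functor, λ a monotone κ-ary predicate lifting for F, and (X,a) a V-category. For p : X → κ → V define (a⋆p) x i = ⨆_z (p z i ⊗ a z x). Then for all 𝔵,𝔶 ∈ F.obj X: ⨅_{f : (X,a) → V^κ V-functor} hom (λ_X f 𝔵) (λ_X f 𝔶) = ⨅_{p : X → κ → V} hom (λ_X p 𝔵) (λ_X (a⋆p) 𝔶). (The Kantorovich lifting with respect to a monotone predicate lifting coincides with the lifting induced by the corresponding Kantorovich lax extension.) -/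
universe u v w

open CategoryTheory

/-- `V` is a (commutative unital) quantale: the tensor distributes over suprema. -/
def QuantaleLaw (V : Type u) [CompleteLattice V] [CommMonoid V] : Prop :=
  ∀ (u : V) (s : Set V), u * sSup s = ⨆ v ∈ s, u * v

/-- Internal hom of the quantale: `hom u w = ⨆ {v | u ⊗ v ≤ w}`. -/
def qhom {V : Type u} [CompleteLattice V] [CommMonoid V] (u w : V) : V :=
  sSup {v | u * v ≤ w}

/-- `a` is a `V`-category structure on `X`. -/
def IsVCat {V : Type u} [CompleteLattice V] [CommMonoid V] {X : Type v}
    (a : X → X → V) : Prop :=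
  (∀ x, (1 : V) ≤ a x x) ∧ ∀ x y z, a x y * a y z ≤ a x z

/-- `f` is a `V`-functor from `(X,a)` to `(Y,b)`. -/
def IsVFunctor {V : Type u} [CompleteLattice V] {X : Type v} {Y : Type w}
    (a : X → X → V) (b : Y → Y → V) (f : X → Y) : Prop :=
  ∀ x y, a x y ≤ b (f x) (f y)

/-- `f` is an initial `V`-functor from `(X,a)` to `(Y,b)`. -/
def IsInitialVFunctor {V : Type u} {X : Type v} {Y : Type w}
    (a : X → X → V) (b : Y → Y → V) (f : X → Y) : Prop :=
  ∀ x y, a x y = b (f x) (f y)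

/-- The `V`-category structure of the power `V^κ`. -/
def powStr {V : Type u} [CompleteLattice V] [CommMonoid V] (κ : Type v)
    (p q : κ → V) : V :=
  ⨅ i, qhom (p i) (q i)

/-- The graph of a function, as a `V`-relation: `k` on the graph, `⊥` elsewhere. -/
def fnGraph {V : Type u} [CompleteLattice V] [CommMonoid V] {X : Type v} {Y : Type w}
    (f : X → Y) : X → Y → V :=
  fun x y => ⨆ _ : f x = y, (1 : V)

/-- A lifting of a `Set`-functor `F` to `V`-Cat. -/
structure Lifting (V : Type u) [CompleteLattice V] [CommMonoid V]
    (F : Type u ⥤ Type u) where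
  str : ∀ {X : Type u}, (X → X → V) → F.obj X → F.obj X → V
  isVCat : ∀ {X : Type u} (a : X → X → V), IsVCat a → IsVCat (str a)
  map : ∀ {X Y : Type u} (a : X → X → V) (b : Y → Y → V) (f : X → Y),
    IsVCat a → IsVCat b → IsVFunctor a b f →
    IsVFunctor (str a) (str b) (F.map (TypeCat.ofHom f))

/-- A `κ`-ary `V`-valued predicate lifting for a `Set`-functor `F`. -/
structure PredLifting (V : Type u) [CompleteLattice V] [CommMonoid V]
    (F : Type u ⥤ Type u) (κ : Type u) where
  app : ∀ {X : Type u}, (X → κ → V) → F.obj X → V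
  natural : ∀ {X Y : Type u} (f : X → Y) (p : Y → κ → V) (t : F.obj X),
    app (fun x => p (f x)) t = app p (F.map (TypeCat.ofHom f) t)

/-- A predicate lifting is monotone if it preserves the pointwise order of predicates. -/
def PredLifting.Mono {V : Type u} [CompleteLattice V] [CommMonoid V]
    {F : Type u ⥤ Type u} {κ : Type u} (lam : PredLifting V F κ) : Prop :=
  ∀ (X : Type u) (p q : X → κ → V), (∀ x i, p x i ≤ q x i) →
    ∀ t, lam.app p t ≤ lam.app q t

/-- A predicate lifting is compatible with a lifting `L` if it lifts `V`-functorial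
predicates to `V`-functorial predicates. -/
def Compatible {V : Type u} [CompleteLattice V] [CommMonoid V] {F : Type u ⥤ Type u}
    (L : Lifting V F) {κ : Type u} (lam : PredLifting V F κ) : Prop :=
  ∀ (X : Type u) (a : X → X → V), IsVCat a → ∀ f : X → κ → V,
    IsVFunctor a (powStr κ) f → IsVFunctor (L.str a) qhom (lam.app f)

/-- The Kantorovich `V`-category structure on `F.obj X` induced by a family of
predicate liftings. -/
noncomputable def kantStr {V : Type u} [CompleteLattice V] [CommMonoid V]
    {F : Type u ⥤ Type u} {ι : Type v} {κ : ι → Type u}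
    (Λ : ∀ l, PredLifting V F (κ l)) {X : Type u} (a : X → X → V)
    (t s : F.obj X) : V :=
  ⨅ l, ⨅ f : {f : X → κ l → V // IsVFunctor a (powStr (κ l)) f},
    qhom ((Λ l).app f.1 t) ((Λ l).app f.1 s)

/-- A generalized predicate lifting for `(F, L)` with parameter `V`-category `(A, α)`. -/
structure GenPredLifting (V : Type u) [CompleteLattice V] [CommMonoid V]
    (F : Type u ⥤ Type u) (L : Lifting V F) (A : Type u) (α : A → A → V) where
  app : ∀ {Z : Type u}, (Z → Z → V) → (Z → A) → F.obj Z → V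
  isVFunctor : ∀ {Z : Type u} (c : Z → Z → V), IsVCat c → ∀ f : Z → A,
    IsVFunctor c α f → IsVFunctor (L.str c) qhom (app c f)
  natural : ∀ {Z Z' : Type u} (c : Z → Z → V) (c' : Z' → Z' → V),
    IsVCat c → IsVCat c' → ∀ (u : Z → Z'), IsVFunctor c c' u →
    ∀ (g : Z' → A), IsVFunctor c' α g →
    ∀ t : F.obj Z, app c (fun z => g (u z)) t = app c' g (F.map (TypeCat.ofHom u) t)

/-- A lax extension of a `Set`-functor `F` to `V`-Rel. -/
structure LaxExt (V : Type u) [CompleteLattice V] [CommMonoid V]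
    (F : Type u ⥤ Type u) where
  ext : ∀ {X Y : Type u}, (X → Y → V) → F.obj X → F.obj Y → V
  mono : ∀ {X Y : Type u} (r r' : X → Y → V), (∀ x y, r x y ≤ r' x y) →
    ∀ t s, ext r t s ≤ ext r' t s
  comp : ∀ {X Y Z : Type u} (r : X → Y → V) (s : Y → Z → V)
    (t : F.obj X) (w : F.obj Z),
    (⨆ u : F.obj Y, ext r t u * ext s u w) ≤
      ext (fun x z => ⨆ y, r x y * s y z) t w
  lax_map : ∀ {X Y : Type u} (f : X → Y) (t : F.obj X),
    (1 : V) ≤ ext (fnGraph f) t (F.map (TypeCat.ofHom f) t)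
  lax_map_op : ∀ {X Y : Type u} (f : X → Y) (t : F.obj X),
    (1 : V) ≤ ext (fun y x => fnGraph f x y) (F.map (TypeCat.ofHom f) t) t

/-!
For a reflexive and transitive `a`, the predicate `a ⋆ p` is a `V`-functor into `V^κ` lying
above `p`, and `a ⋆ f ≤ f` whenever `f` is already a `V`-functor. Since `hom` is antitone in its
first argument and monotone in its second, monotonicity of `λ` turns the first fact into `≤` and
the second into `≥`.
-/

section Quantale

variable {V : Type u} [CompleteLattice V] [CommMonoid V]

theorem QuantaleLaw.mul_sup (hV : QuantaleLaw V) (u v w : V) :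
    u * (v ⊔ w) = u * v ⊔ u * w := by
  rw [← sSup_pair, hV, iSup_pair]

theorem QuantaleLaw.mul_le_mul_left (hV : QuantaleLaw V) (u : V) {v w : V} (h : v ≤ w) :
    u * v ≤ u * w :=
  calc u * v ≤ u * v ⊔ u * w := le_sup_left
    _ = u * w := by rw [← hV.mul_sup, sup_eq_right.mpr h]

theorem QuantaleLaw.mul_iSup (hV : QuantaleLaw V) {ι : Sort*} (u : V) (g : ι → V) :
    u * ⨆ i, g i = ⨆ i, u * g i := by
  rw [← sSup_range, hV, iSup_range]

theorem QuantaleLaw.iSup_mul (hV : QuantaleLaw V) {ι : Sort*} (g : ι → V) (u : V) :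
    (⨆ i, g i) * u = ⨆ i, g i * u := by
  simpa only [mul_comm] using hV.mul_iSup u g

theorem QuantaleLaw.le_qhom_iff (hV : QuantaleLaw V) {u v w : V} :
    v ≤ qhom u w ↔ u * v ≤ w := by
  refine ⟨fun h => ?_, fun h => le_sSup h⟩
  calc u * v ≤ u * qhom u w := hV.mul_le_mul_left u h
    _ = ⨆ v' ∈ {v' | u * v' ≤ w}, u * v' := hV u _
    _ ≤ w := iSup₂_le fun _ hv' => hv'

theorem QuantaleLaw.mul_qhom_le (hV : QuantaleLaw V) (u w : V) : u * qhom u w ≤ w :=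
  hV.le_qhom_iff.1 le_rfl

theorem QuantaleLaw.qhom_anti_left (hV : QuantaleLaw V) {u u' w : V} (h : u' ≤ u) :
    qhom u w ≤ qhom u' w :=
  hV.le_qhom_iff.2 <| calc
    u' * qhom u w = qhom u w * u' := mul_comm _ _
    _ ≤ qhom u w * u := hV.mul_le_mul_left _ h
    _ = u * qhom u w := mul_comm _ _
    _ ≤ w := hV.mul_qhom_le u w

theorem qhom_mono_right {u w w' : V} (h : w ≤ w') : qhom u w ≤ qhom u w' :=
  sSup_le_sSup fun _ hv => hv.trans h

end Quantale

section Star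

variable {V : Type u} [CompleteLattice V] [CommMonoid V] {X : Type v} {κ : Type w}

/-- The predicate `a ⋆ p`. -/
def vStar (a : X → X → V) (p : X → κ → V) : X → κ → V :=
  fun x i => ⨆ z, p z i * a z x

theorem isVFunctor_vStar (hV : QuantaleLaw V) {a : X → X → V}
    (htrans : ∀ x y z, a x y * a y z ≤ a x z) (p : X → κ → V) :
    IsVFunctor a (powStr κ) (vStar a p) := by
  refine fun x y => le_iInf fun i => hV.le_qhom_iff.2 ?_
  rw [vStar, hV.iSup_mul]
  refine iSup_le fun z => ?_
  calc p z i * a z x * a x y = p z i * (a z x * a x y) := mul_assoc _ _ _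
    _ ≤ p z i * a z y := hV.mul_le_mul_left _ (htrans z x y)
    _ ≤ vStar a p y i := le_iSup (fun z' => p z' i * a z' y) z

theorem le_vStar (hV : QuantaleLaw V) {a : X → X → V} (hrefl : ∀ x, (1 : V) ≤ a x x)
    (p : X → κ → V) : p ≤ vStar a p := fun x i =>
  calc p x i = p x i * 1 := (mul_one _).symm
    _ ≤ p x i * a x x := hV.mul_le_mul_left _ (hrefl x)
    _ ≤ vStar a p x i := le_iSup (fun z => p z i * a z x) x

theorem vStar_le_of_isVFunctor (hV : QuantaleLaw V) {a : X → X → V} {f : X → κ → V}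
    (hf : IsVFunctor a (powStr κ) f) : vStar a f ≤ f := fun x i =>
  iSup_le fun z => calc
    f z i * a z x ≤ f z i * qhom (f z i) (f x i) :=
      hV.mul_le_mul_left _ ((hf z x).trans (iInf_le _ i))
    _ ≤ f x i := hV.mul_qhom_le _ _

end Star

/-- the Kantorovich lifting w.r.t. a monotone predicate lifting coincides
with the lifting induced by the corresponding Kantorovich lax extension. -/
theorem stmt_5 {V : Type u} [CompleteLattice V] [CommMonoid V] (hV : QuantaleLaw V)
    {F : Type u ⥤ Type u} {κ : Type u} (lam : PredLifting V F κ) (hmono : lam.Mono)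
    {X : Type u} (a : X → X → V) (ha : IsVCat a) (t s : F.obj X) :
    (⨅ f : {f : X → κ → V // IsVFunctor a (powStr κ) f},
        qhom (lam.app f.1 t) (lam.app f.1 s)) =
    ⨅ p : X → κ → V,
        qhom (lam.app p t) (lam.app (fun x i => ⨆ z, p z i * a z x) s) := by
  apply le_antisymm
  · refine le_iInf fun p => (iInf_le _ ⟨vStar a p, isVFunctor_vStar hV ha.2 p⟩).trans ?_
    exact hV.qhom_anti_left (hmono X _ _ (le_vStar hV ha.1 p) t)
  · refine le_iInf fun f => (iInf_le _ f.1).trans ?_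
    exact qhom_mono_right (hmono X _ _ (vStar_le_of_isVFunctor hV f.2) s)
end

section
/- Let V be a commutative unital quantale, F : Type u ⥤ Type u a functor, L a lifting of F to V-Cat, and λ a κ-ary predicate lifting for F. Then λ is compatible with L if and only if λ_{κ→V} applied to the identity predicate id : (κ → V) → (κ → V) is a V-functor from (F.obj (κ → V), L [−,−]) to (V,hom), where [−,−] is the structure of V^κ; that is, iff for all 𝔵,𝔶 ∈ F.obj (κ → V), L [−,−] 𝔵 𝔶 ≤ hom (λ_{κ→V} id 𝔵) (λ_{κ→V} id 𝔶). -/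
universe u v w

open CategoryTheory

/-! By naturality, `λ_X f = λ_{κ→V} id ∘ F f` for every `f : X → V^κ` (a Yoneda argument), and
`F f` is a `V`-functor for the lifted structures whenever `f` is one. Hence compatibility only has
to be checked on the generic predicate `id : V^κ → V^κ`, which is itself a `V`-functor. -/

namespace QuantaleLaw

variable {V : Type u} [CompleteLattice V] [CommMonoid V]

theorem mul_le_mul_left' (hV : QuantaleLaw V) (u : V) {v w : V} (h : v ≤ w) :
    u * v ≤ u * w := by
  have hw : u * w = u * sSup {v, w} := by rw [sSup_pair, sup_eq_right.mpr h]
  rw [hw, hV u {v, w}]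
  exact le_biSup _ (Set.mem_insert v {w})

theorem mul_le_mul' (hV : QuantaleLaw V) {u u' v w : V} (hu : u ≤ u') (hv : v ≤ w) :
    u * v ≤ u' * w :=
  calc u * v ≤ u * w := hV.mul_le_mul_left' u hv
    _ = w * u := mul_comm _ _
    _ ≤ w * u' := hV.mul_le_mul_left' w hu
    _ = u' * w := mul_comm _ _

theorem mul_le_iff_le_qhom (hV : QuantaleLaw V) {u v w : V} : u * v ≤ w ↔ v ≤ qhom u w := by
  refine ⟨fun h => le_sSup h, fun h => ?_⟩
  calc u * v ≤ u * qhom u w := hV.mul_le_mul_left' u h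
    _ = ⨆ x ∈ {x | u * x ≤ w}, u * x := hV u _
    _ ≤ w := iSup₂_le fun _ hx => hx

theorem mul_qhom_le_s8 (hV : QuantaleLaw V) (u w : V) : u * qhom u w ≤ w :=
  hV.mul_le_iff_le_qhom.mpr le_rfl

theorem powStr_isVCat (hV : QuantaleLaw V) (κ : Type v) : IsVCat (powStr (V := V) κ) := by
  refine ⟨fun p => le_iInf fun i => hV.mul_le_iff_le_qhom.mp (mul_one (p i)).le,
    fun p q r => le_iInf fun i => hV.mul_le_iff_le_qhom.mp ?_⟩
  calc p i * (powStr κ p q * powStr κ q r)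
      ≤ p i * (qhom (p i) (q i) * qhom (q i) (r i)) :=
        hV.mul_le_mul_left' _ (hV.mul_le_mul' (iInf_le _ i) (iInf_le _ i))
    _ = p i * qhom (p i) (q i) * qhom (q i) (r i) := (mul_assoc _ _ _).symm
    _ ≤ q i * qhom (q i) (r i) := hV.mul_le_mul' (hV.mul_qhom_le_s8 _ _) le_rfl
    _ ≤ r i := hV.mul_qhom_le_s8 _ _

end QuantaleLaw

theorem IsVFunctor.id {V : Type u} [CompleteLattice V] {X : Type v} (a : X → X → V) :
    IsVFunctor a a fun x => x :=
  fun _ _ => le_rfl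

theorem IsVFunctor.comp {V : Type u} [CompleteLattice V] {X : Type v} {Y : Type w} {Z : Type*}
    {a : X → X → V} {b : Y → Y → V} {c : Z → Z → V} {f : X → Y} {g : Y → Z}
    (hg : IsVFunctor b c g) (hf : IsVFunctor a b f) : IsVFunctor a c (g ∘ f) :=
  fun x y => (hf x y).trans (hg (f x) (f y))

theorem PredLifting.app_eq_app_id_comp_map {V : Type u} [CompleteLattice V] [CommMonoid V]
    {F : Type u ⥤ Type u} {κ : Type u} (lam : PredLifting V F κ) {X : Type u}
    (f : X → κ → V) : lam.app f = lam.app (fun p => p) ∘ F.map (TypeCat.ofHom f) :=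
  funext (lam.natural f fun p => p)

/-- a predicate lifting is compatible with a lifting `L` iff its value on
the identity predicate is a `V`-functor `(F.obj (κ → V), L [−,−]) → (V, hom)`. -/
theorem stmt_8 {V : Type u} [CompleteLattice V] [CommMonoid V] (hV : QuantaleLaw V)
    {F : Type u ⥤ Type u} (L : Lifting V F) {κ : Type u}
    (lam : PredLifting V F κ) :
    Compatible L lam ↔
      ∀ t s : F.obj (κ → V),
        L.str (powStr κ) t s ≤
          qhom (lam.app (fun p => p) t) (lam.app (fun p => p) s) := by
  constructor
  · intro hCompat
    exact hCompat _ _ (hV.powStr_isVCat κ) _ (IsVFunctor.id _)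
  · intro hId X a ha f hf
    rw [lam.app_eq_app_id_comp_map f]
    exact IsVFunctor.comp hId (L.map a (powStr κ) f ha (hV.powStr_isVCat κ) hf)
end
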